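/- Let D ⊆ ℝ be nonempty with finite supremum s_D, and let ν be a Borel probability measure supported on D with finite mean μ. Let X = (X_1,…,X_n) and Z = (Z_1,…,Z_n) be independent i.i.d. samples with law ν, and let U = (U_1,…,U_n) be i.i.d. Uniform(0,1) independent of X. Then for any T : ℝⁿ → ℝ and any α ∈ (0,1): P_X( P_U(b_{D,T}(X,U) ≥ μ) ≤ α ) ≤ P_X( P_Z(T(Z) ≤ T(X)) ≤ α ), where P_U(b_{D,T}(X,U) ≥ μ) denotes the conditional probability over U with X fixed, and P_Z(T(Z) ≤ T(X)) the conditional probability over Z with X fixed. -/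

import Mathlib

open MeasureTheory Set

/-- The sorted rearrangement (order statistics) of a finite real vector:
`sortedVec x i` is the (i+1)-st order statistic `x_{(i+1)}` (0-indexed). -/
noncomputable def sortedVec {n : ℕ} (x : Fin n → ℝ) : Fin n → ℝ :=
  x ∘ ⇑(Tuple.sort x)

/-- The induced mean `m(x, ℓ) = s - ∑ ℓ_{(i)} (x_{(i+1)} - x_{(i)})`, with `x_{(n+1)} := s`. -/
noncomputable def inducedMean {n : ℕ} (s : ℝ) (x ℓ : Fin n → ℝ) : ℝ :=
  s - ∑ i : Fin n, sortedVec ℓ i * ((Fin.snoc (sortedVec x) s : Fin (n+1) → ℝ) i.succ - sortedVec x i)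

/-- `S_{D,T}(x) = {y ∈ Dⁿ : T y ≤ T x}`. -/
def SsetD {n : ℕ} (D : Set ℝ) (T : (Fin n → ℝ) → ℝ) (x : Fin n → ℝ) : Set (Fin n → ℝ) :=
  {y | (∀ i, y i ∈ D) ∧ T y ≤ T x}

/-- `b_{D,T}(x, u) = sup_{z ∈ S_{D,T}(x)} m_{sup D}(z, u)`. -/
noncomputable def bfun {n : ℕ} (D : Set ℝ) (T : (Fin n → ℝ) → ℝ) (x u : Fin n → ℝ) : ℝ :=
  sSup ((fun z => inducedMean (sSup D) z u) '' SsetD D T x)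

/-- The uniform probability measure on `[0,1]`. -/
noncomputable def unif01 : Measure ℝ := volume.restrict (Icc (0:ℝ) 1)

/-- The law of an i.i.d. sample of size `n` from Uniform(0,1). -/
noncomputable def unifPi (n : ℕ) : Measure (Fin n → ℝ) := Measure.pi fun _ => unif01

/-- The `p`-quantile of the random variable `Y` under `μ`:
`Q(p, Y) = inf {y : P(Y ≤ y) ≥ p}`. -/
noncomputable def rquantile {Ω : Type*} [MeasurableSpace Ω] (μ : Measure Ω)
    (Y : Ω → ℝ) (p : ℝ) : ℝ :=
  sInf {y : ℝ | ENNReal.ofReal p ≤ μ {ω | Y ω ≤ y}}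

/-- The upper confidence bound `b^α_{D,T}(x) = Q(1 - α, b_{D,T}(x, U))`, `U` i.i.d. Uniform(0,1). -/
noncomputable def ucb {n : ℕ} (D : Set ℝ) (T : (Fin n → ℝ) → ℝ) (α : ℝ)
    (x : Fin n → ℝ) : ℝ :=
  rquantile (unifPi n) (bfun D T x) (1 - α)

/-- The stairstep function `G_{x,ℓ}` with top value at `s`. -/
noncomputable def stairstep {n : ℕ} (s : ℝ) (x ℓ : Fin n → ℝ) (t : ℝ) : ℝ :=
  if s ≤ t then 1 else sSup ({0} ∪ (sortedVec ℓ '' {i | sortedVec x i ≤ t}))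

/-- The `k`-th smallest value (1-indexed) among `m 0, …, m (L-1)`. -/
noncomputable def kthSmallest {L : ℕ} (m : Fin L → ℝ) (k : ℕ) : ℝ :=
  sInf {y : ℝ | k ≤ Nat.card {j : Fin L // m j ≤ y}}

open ProbabilityTheory Filter

/-!
Let `Q` be the quantile function of `ν`, so that `Q(U₁), …, Q(Uₙ)` is an i.i.d. sample of law `ν`.
For `u ∈ (0,1]ⁿ` with order statistics `u₍ᵢ₎`, sorting commutes with the monotone `Q`, so
`m_D(Q(u), u) = s_D − ∫₀¹ ∑ᵢ 1{p ≤ u₍ᵢ₎} (Q(u₍ᵢ₊₁₎) − Q(u₍ᵢ₎)) dp` with `Q(u₍ₙ₊₁₎) := s_D`.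
The integrand telescopes to at most `s_D − Q(p)`, whose integral is `s_D − μ`; hence
`μ ≤ m_D(Q(u), u)`. So whenever `T(Q(U)) ≤ T(x)`, the point `Q(U)` lies in `S_{D,T}(x)` and
`μ ≤ b_{D,T}(x, U)`, which gives `P_Z(T(Z) ≤ T(x)) ≤ P_U(b_{D,T}(x, U) ≥ μ)` for every `x`.
As `T` is arbitrary, the events involved need not be measurable: the first step compares outer
measures, which is possible because pushing a measure forward between standard Borel spaces
preserves outer measure.
-/

lemma Fin.sum_succ_sub_castSucc {n : ℕ} {M : Type*} [AddCommGroup M] (g : Fin (n + 1) → M) :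
    ∑ i : Fin n, (g i.succ - g i.castSucc) = g (Fin.last n) - g 0 := by
  rw [Finset.sum_sub_distrib, sub_eq_sub_iff_add_eq_add, add_comm, ← Fin.sum_univ_succ,
    Fin.sum_univ_castSucc, add_comm]

lemma Monotone.fin_snoc {n : ℕ} {α : Type*} [Preorder α] {z : Fin n → α} (hz : Monotone z)
    {s : α} (hs : ∀ i, z i ≤ s) : Monotone (Fin.snoc z s : Fin (n + 1) → α) := by
  refine Fin.monotone_iff_le_succ.2 fun i => ?_
  rw [Fin.snoc_castSucc]
  rcases Fin.eq_castSucc_or_eq_last i.succ with ⟨j, hj⟩ | hl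
  · rw [hj, Fin.snoc_castSucc]
    exact hz (Fin.castSucc_le_castSucc_iff.1 (hj ▸ Fin.castSucc_le_succ i))
  · rw [hl, Fin.snoc_last]
    exact hs i

lemma Monotone.sum_ite_sub_le {n : ℕ} {c : Fin (n + 1) → ℝ} (hc : Monotone c) {q : ℝ}
    (hq : q ≤ c (Fin.last n)) (P : Fin n → Prop) [DecidablePred P]
    (hP : ∀ i, P i → q ≤ c i.castSucc) :
    ∑ i, (if P i then c i.succ - c i.castSucc else 0) ≤ c (Fin.last n) - q := by
  calc ∑ i, (if P i then c i.succ - c i.castSucc else 0)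
      ≤ ∑ i : Fin n, (max (c i.succ) q - max (c i.castSucc) q) := by
        refine Finset.sum_le_sum fun i _ => ?_
        have hi := hc (Fin.castSucc_le_succ i)
        split_ifs with h
        · rw [max_eq_left (hP i h), max_eq_left ((hP i h).trans hi)]
        · exact sub_nonneg.2 (max_le_max_right q hi)
    _ = max (c (Fin.last n)) q - max (c 0) q := Fin.sum_succ_sub_castSucc fun j => max (c j) q
    _ ≤ c (Fin.last n) - q := by
        rw [max_eq_left hq]
        linarith [le_max_right (c 0) q]

lemma sortedVec_comp_of_monotoneOn {n : ℕ} {x : Fin n → ℝ} {g : ℝ → ℝ} {S : Set ℝ}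
    (hg : MonotoneOn g S) (hx : ∀ i, x i ∈ S) : sortedVec (g ∘ x) = g ∘ sortedVec x :=
  (Tuple.comp_sort_eq_comp_iff_monotone (f := g ∘ x) (σ := Tuple.sort x)).2
    (fun _ _ hij => hg (hx _) (hx _) (Tuple.monotone_sort x hij)) |>.symm

lemma inducedMean_le {n : ℕ} {s : ℝ} {z u : Fin n → ℝ} (hz : ∀ i, z i ≤ s) (hu : ∀ i, 0 ≤ u i) :
    inducedMean s z u ≤ s := by
  have hmono : Monotone (Fin.snoc (sortedVec z) s : Fin (n + 1) → ℝ) :=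
    (Tuple.monotone_sort z).fin_snoc fun i => hz _
  refine sub_le_self _ (Finset.sum_nonneg fun i _ => mul_nonneg (hu _) (sub_nonneg.2 ?_))
  simpa only [Fin.snoc_castSucc] using hmono (Fin.castSucc_le_succ i)

lemma MeasureTheory.Measure.ae_forall_pi {ι : Type*} [Fintype ι] {X : ι → Type*}
    [∀ i, MeasurableSpace (X i)] {μ : ∀ i, Measure (X i)} [∀ i, SigmaFinite (μ i)]
    {P : ∀ i, X i → Prop} (h : ∀ i, ∀ᵐ y ∂μ i, P i y) : ∀ᵐ x ∂Measure.pi μ, ∀ i, P i (x i) :=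
  ae_all_iff.2 fun i => (Measure.quasiMeasurePreserving_eval μ i).ae (h i)

/-- The reverse inequality is `Measure.le_map_apply`. This one matters for non-measurable `B`,
and is proved by disintegrating `μ` along `f`. -/
theorem MeasureTheory.Measure.map_apply_le_of_standardBorel {X Y : Type*}
    [MeasurableSpace X] [StandardBorelSpace X] [Nonempty X] [MeasurableSpace Y] [MeasurableEq Y]
    (μ : Measure X) [IsFiniteMeasure μ] {f : X → Y} (hf : Measurable f) (B : Set Y) :
    μ.map f B ≤ μ (f ⁻¹' B) := by
  set π := μ.map (fun x => (f x, x))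
  have hgraph : Measurable fun x => (f x, x) := hf.prodMk measurable_id
  have hfst : π.fst = μ.map f := by
    rw [Measure.fst, Measure.map_map measurable_fst hgraph]; rfl
  set κ := π.condKernel
  set E := toMeasurable μ (f ⁻¹' B)
  have hE : MeasurableSet E := measurableSet_toMeasurable μ _
  have hfiber : ∀ᵐ y ∂(μ.map f), ∀ᵐ x ∂(κ y), f x = y := by
    have hdiag : MeasurableSet {p : Y × X | f p.2 = p.1} :=
      measurableSet_eq_fun (hf.comp measurable_snd) measurable_fst
    rw [← hfst, ← ae_compProd_iff (p := fun p : Y × X => f p.2 = p.1) hdiag, π.disintegrate κ]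
    exact (ae_map_iff hgraph.aemeasurable hdiag).2 (ae_of_all _ fun _ => rfl)
  have hB : ∀ᵐ y ∂(μ.map f), y ∈ B → y ∈ {y | 1 ≤ κ y E} := by
    filter_upwards [hfiber] with y hy hyB
    have hyE : ∀ᵐ x ∂(κ y), x ∈ E := by
      filter_upwards [hy] with x hx
      exact subset_toMeasurable μ _ (show f x ∈ B from hx ▸ hyB)
    rw [← measure_univ (μ := κ y)]
    exact ((ae_iff_measure_eq hE.nullMeasurableSet).1 hyE).ge
  calc μ.map f B ≤ μ.map f {y | 1 ≤ κ y E} := measure_mono_ae hB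
    _ ≤ ∫⁻ y, κ y E ∂(μ.map f) := by
      simpa using mul_meas_ge_le_lintegral₀ (κ.measurable_coe hE).aemeasurable 1
    _ = π (univ ×ˢ E) := by
      conv_rhs => rw [← π.disintegrate κ]
      rw [Measure.compProd_apply_prod MeasurableSet.univ hE, Measure.restrict_univ, hfst]
    _ = μ (f ⁻¹' B) := by
      rw [Measure.map_apply hgraph (MeasurableSet.univ.prod hE), univ_prod, preimage_preimage]
      exact measure_toMeasurable _

theorem MeasureTheory.Measure.map_apply_le_of_standardBorel₀ {X Y : Type*}
    [MeasurableSpace X] [StandardBorelSpace X] [Nonempty X] [MeasurableSpace Y] [MeasurableEq Y]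
    (μ : Measure X) [IsFiniteMeasure μ] {f : X → Y} (hf : AEMeasurable f μ) (B : Set Y) :
    μ.map f B ≤ μ (f ⁻¹' B) := by
  rw [Measure.map_congr hf.ae_eq_mk]
  refine (map_apply_le_of_standardBorel μ hf.measurable_mk B).trans_eq (measure_congr ?_)
  filter_upwards [hf.ae_eq_mk] with x hx
  change (hf.mk f x ∈ B) = (f x ∈ B)
  rw [hx]

instance : IsProbabilityMeasure unif01 :=
  ⟨by rw [unif01, Measure.restrict_apply MeasurableSet.univ, univ_inter, Real.volume_Icc]; norm_num⟩

instance (n : ℕ) : IsProbabilityMeasure (unifPi n) := by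
  rw [unifPi]; infer_instance

lemma unif01_eq_restrict_Ioc : unif01 = volume.restrict (Ioc 0 1) :=
  Measure.restrict_congr_set Ioc_ae_eq_Icc.symm

lemma ae_unif01_mem_Ioc : ∀ᵐ p ∂unif01, p ∈ Ioc (0 : ℝ) 1 := by
  rw [unif01_eq_restrict_Ioc]
  exact ae_restrict_mem measurableSet_Ioc

lemma unif01_Ioc {c : ℝ} (hc : c ≤ 1) : unif01 (Ioc 0 c) = ENNReal.ofReal c := by
  rw [unif01_eq_restrict_Ioc, Measure.restrict_apply measurableSet_Ioc,
    inter_eq_self_of_subset_left (Ioc_subset_Ioc_right hc), Real.volume_Ioc, sub_zero]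

/-- Only the values on `(0, 1]` matter: elsewhere the infimum is taken over an empty or
unbounded set and the value is junk. -/
noncomputable def quantile (ν : Measure ℝ) (p : ℝ) : ℝ :=
  sInf {x | p ≤ cdf ν x}

lemma bddBelow_setOf_le_cdf (ν : Measure ℝ) {p : ℝ} (hp : 0 < p) : BddBelow {x | p ≤ cdf ν x} := by
  obtain ⟨x₀, hx₀⟩ := eventually_atBot.1 ((tendsto_cdf_atBot (μ := ν)).eventually (gt_mem_nhds hp))
  exact ⟨x₀, fun x hx => le_of_not_gt fun hlt => (hx₀ x hlt.le).not_ge hx⟩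

section Quantile

variable {ν : Measure ℝ} {s p t : ℝ}

lemma quantile_le_iff (hs : cdf ν s = 1) (hp : p ∈ Ioc 0 1) :
    quantile ν p ≤ t ↔ p ≤ cdf ν t := by
  have hne : {x | p ≤ cdf ν x}.Nonempty := ⟨s, show p ≤ cdf ν s by rw [hs]; exact hp.2⟩
  refine ⟨fun h => ?_, fun h => csInf_le (bddBelow_setOf_le_cdf ν hp.1) h⟩
  refine ge_of_tendsto (((cdf ν).right_continuous t).mono Ioi_subset_Ici_self)
    (eventually_nhdsWithin_of_forall fun y (hy : t < y) => ?_)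
  obtain ⟨x, hx, hxy⟩ := exists_lt_of_csInf_lt hne (h.trans_lt hy)
  exact hx.trans (monotone_cdf ν hxy.le)

lemma quantile_le (hs : cdf ν s = 1) (hp : p ∈ Ioc 0 1) : quantile ν p ≤ s :=
  (quantile_le_iff hs hp).2 (by rw [hs]; exact hp.2)

lemma monotoneOn_quantile (hs : cdf ν s = 1) : MonotoneOn (quantile ν) (Ioc 0 1) :=
  fun _ hp _ hq hpq => (quantile_le_iff hs hp).2 (hpq.trans ((quantile_le_iff hs hq).1 le_rfl))

lemma aemeasurable_quantile (hs : cdf ν s = 1) : AEMeasurable (quantile ν) unif01 := by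
  rw [unif01_eq_restrict_Ioc]
  exact aemeasurable_restrict_of_monotoneOn measurableSet_Ioc (monotoneOn_quantile hs)

lemma aemeasurable_pi_quantile (hs : cdf ν s = 1) (n : ℕ) :
    AEMeasurable (fun u (i : Fin n) => quantile ν (u i)) (unifPi n) :=
  aemeasurable_pi_lambda _ fun i =>
    (aemeasurable_quantile hs).comp_quasiMeasurePreserving (Measure.quasiMeasurePreserving_eval _ i)

variable [IsProbabilityMeasure ν]

lemma map_quantile_unif01 (hs : cdf ν s = 1) : unif01.map (quantile ν) = ν := by
  refine Measure.ext_of_Iic _ _ fun t => ?_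
  have hpre : quantile ν ⁻¹' Iic t ∩ Ioc 0 1 = Ioc 0 (cdf ν t) := by
    ext p
    simp only [mem_inter_iff, mem_preimage, mem_Iic, mem_Ioc]
    constructor
    · rintro ⟨hq, hp⟩
      exact ⟨hp.1, (quantile_le_iff hs hp).1 hq⟩
    · rintro ⟨hp0, hpt⟩
      have hp : p ∈ Ioc (0 : ℝ) 1 := ⟨hp0, hpt.trans (cdf_le_one ν t)⟩
      exact ⟨(quantile_le_iff hs hp).2 hpt, hp⟩
  rw [Measure.map_apply_of_aemeasurable (aemeasurable_quantile hs) measurableSet_Iic,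
    unif01_eq_restrict_Ioc, Measure.restrict_apply' measurableSet_Ioc, hpre, Real.volume_Ioc,
    sub_zero, ofReal_cdf]

lemma map_pi_quantile_unifPi (hs : cdf ν s = 1) (n : ℕ) :
    (unifPi n).map (fun u i => quantile ν (u i)) = Measure.pi fun _ : Fin n => ν := by
  rw [unifPi, Measure.pi_map_pi fun _ => aemeasurable_quantile hs, map_quantile_unif01 hs]

lemma integrable_quantile (hs : cdf ν s = 1) (hint : Integrable id ν) :
    Integrable (quantile ν) unif01 := by
  rw [← map_quantile_unif01 hs] at hint
  exact (integrable_map_measure aestronglyMeasurable_id (aemeasurable_quantile hs)).1 hint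

lemma integral_quantile (hs : cdf ν s = 1) : ∫ p, quantile ν p ∂unif01 = ∫ t, t ∂ν := by
  conv_rhs => rw [← map_quantile_unif01 hs]
  exact (integral_map (aemeasurable_quantile hs) aestronglyMeasurable_id).symm

theorem integral_le_inducedMean_quantile (hs : cdf ν s = 1) (hint : Integrable id ν) {n : ℕ}
    {u : Fin n → ℝ} (hu : ∀ i, u i ∈ Ioc 0 1) :
    ∫ t, t ∂ν ≤ inducedMean s (quantile ν ∘ u) u := by
  set a := sortedVec u
  have ha : ∀ i, a i ∈ Ioc 0 1 := fun i => hu _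
  set c : Fin (n + 1) → ℝ := Fin.snoc (quantile ν ∘ a) s
  have hc : Monotone c := Monotone.fin_snoc
    (fun i j hij => monotoneOn_quantile hs (ha i) (ha j) (Tuple.monotone_sort u hij))
    fun i => quantile_le hs (ha i)
  have hcast : ∀ i, c i.castSucc = quantile ν (a i) := fun i => Fin.snoc_castSucc ..
  set d : Fin n → ℝ := fun i => c i.succ - c i.castSucc
  have hmean : inducedMean s (quantile ν ∘ u) u = s - ∑ i, a i * d i := by
    rw [inducedMean, sortedVec_comp_of_monotoneOn (monotoneOn_quantile hs) hu]
    simp only [d, hcast]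
    rfl
  have hpt : ∀ᵐ p ∂unif01, ∑ i, (Ioc 0 (a i)).indicator (fun _ => d i) p ≤ s - quantile ν p := by
    filter_upwards [ae_unif01_mem_Ioc] with p hp
    simp only [indicator_apply, mem_Ioc, hp.1, true_and]
    have hlast : c (Fin.last n) = s := Fin.snoc_last ..
    refine hlast ▸ hc.sum_ite_sub_le (hlast ▸ quantile_le hs hp) _ fun i hi => ?_
    rw [hcast]
    exact monotoneOn_quantile hs hp (ha i) hi
  have hind : ∀ i, Integrable ((Ioc 0 (a i)).indicator fun _ => d i) unif01 :=
    fun i => (integrable_const (d i)).indicator measurableSet_Ioc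
  have hsum : ∑ i, a i * d i ≤ s - ∫ t, t ∂ν := calc
    ∑ i, a i * d i = ∫ p, ∑ i, (Ioc 0 (a i)).indicator (fun _ => d i) p ∂unif01 := by
      rw [integral_finsetSum _ fun i _ => hind i]
      refine Finset.sum_congr rfl fun i _ => ?_
      rw [integral_indicator_const _ measurableSet_Ioc, measureReal_def, unif01_Ioc (ha i).2,
        ENNReal.toReal_ofReal (ha i).1.le, smul_eq_mul]
    _ ≤ ∫ p, (s - quantile ν p) ∂unif01 :=
      integral_mono_ae (integrable_finsetSum _ fun i _ => hind i)
        ((integrable_const s).sub (integrable_quantile hs hint)) hpt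
    _ = s - ∫ t, t ∂ν := by
      rw [integral_sub (integrable_const s) (integrable_quantile hs hint), integral_const,
        integral_quantile hs, probReal_univ, one_smul]
  linarith

end Quantile

lemma cdf_sSup_eq_one {D : Set ℝ} (hbdd : BddAbove D) {ν : Measure ℝ} [IsProbabilityMeasure ν]
    (hsupp : ∀ᵐ t ∂ν, t ∈ D) : cdf ν (sSup D) = 1 := by
  have h : ν (Iic (sSup D))ᶜ = 0 := ae_iff.1 (hsupp.mono fun t ht => le_csSup hbdd ht)
  rw [cdf_eq_real, measureReal_def, (prob_compl_eq_zero_iff measurableSet_Iic).1 h,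
    ENNReal.toReal_one]

theorem integral_le_bfun {n : ℕ} {D : Set ℝ} (hbdd : BddAbove D) {ν : Measure ℝ}
    [IsProbabilityMeasure ν] (hs : cdf ν (sSup D) = 1) (hint : Integrable id ν)
    (T : (Fin n → ℝ) → ℝ) {x u : Fin n → ℝ} (hu : ∀ i, u i ∈ Ioc 0 1)
    (hz : quantile ν ∘ u ∈ SsetD D T x) :
    ∫ t, t ∂ν ≤ bfun D T x u := by
  refine (integral_le_inducedMean_quantile hs hint hu).trans (le_csSup ⟨sSup D, ?_⟩ ⟨_, hz, rfl⟩)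
  rintro _ ⟨z, hz, rfl⟩
  exact inducedMean_le (fun i => le_csSup hbdd (hz.1 i)) fun i => (hu i).1.le

theorem stmt5_general {n : ℕ} (D : Set ℝ) (hbdd : BddAbove D)
    (ν : Measure ℝ) [IsProbabilityMeasure ν] (hsupp : ∀ᵐ t ∂ν, t ∈ D)
    (hint : Integrable id ν) (μmean : ℝ) (hmean : μmean = ∫ t, t ∂ν)
    (T : (Fin n → ℝ) → ℝ) (α : ℝ) :
    (Measure.pi fun _ : Fin n => ν)
        {x | unifPi n {u | μmean ≤ bfun D T x u} ≤ ENNReal.ofReal α}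
      ≤ (Measure.pi fun _ : Fin n => ν)
        {x | (Measure.pi fun _ : Fin n => ν) {z | T z ≤ T x} ≤ ENNReal.ofReal α} := by
  have hs := cdf_sSup_eq_one hbdd hsupp
  have hD : ∀ᵐ p ∂unif01, quantile ν p ∈ D :=
    ae_of_ae_map (aemeasurable_quantile hs) (by rwa [map_quantile_unif01 hs])
  refine measure_mono (ofPred_subset_ofPred.2 fun x hx => le_trans ?_ hx)
  calc (Measure.pi fun _ : Fin n => ν) {z | T z ≤ T x}
      = (unifPi n).map (fun u i => quantile ν (u i)) {z | T z ≤ T x} := by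
        rw [map_pi_quantile_unifPi hs]
    _ ≤ unifPi n ((fun u i => quantile ν (u i)) ⁻¹' {z | T z ≤ T x}) :=
        Measure.map_apply_le_of_standardBorel₀ _ (aemeasurable_pi_quantile hs n) _
    _ ≤ unifPi n {u | μmean ≤ bfun D T x u} := by
        refine measure_mono_ae ?_
        filter_upwards [Measure.ae_forall_pi fun _ => ae_unif01_mem_Ioc,
          Measure.ae_forall_pi fun _ => hD] with u hu hDu hT
        exact hmean ▸ integral_le_bfun hbdd hs hint T hu ⟨hDu, hT⟩

/-- `P_X(P_U(b_{D,T}(X,U) ≥ μ) ≤ α) ≤ P_X(P_Z(T(Z) ≤ T(X)) ≤ α)`,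
where `X, Z` are i.i.d. samples from `ν` (supported on `D`, mean `μ`) and `U` is
an i.i.d. Uniform(0,1) sample; the inner probabilities are over `U` resp. `Z`
with `X` fixed. -/
theorem stmt5 {n : ℕ} (D : Set ℝ) (hD : D.Nonempty) (hbdd : BddAbove D)
    (ν : Measure ℝ) [IsProbabilityMeasure ν] (hsupp : ∀ᵐ t ∂ν, t ∈ D)
    (hint : Integrable id ν) (μmean : ℝ) (hmean : μmean = ∫ t, t ∂ν)
    (T : (Fin n → ℝ) → ℝ) (α : ℝ) (hα : α ∈ Set.Ioo (0:ℝ) 1) :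
    (Measure.pi fun _ : Fin n => ν)
        {x | unifPi n {u | μmean ≤ bfun D T x u} ≤ ENNReal.ofReal α}
      ≤ (Measure.pi fun _ : Fin n => ν)
        {x | (Measure.pi fun _ : Fin n => ν) {z | T z ≤ T x} ≤ ENNReal.ofReal α} :=
  stmt5_general D hbdd ν hsupp hint μmean hmean T α
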